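/- arXiv:1503.01651 — 3 statements merged into one kernel-verified Lean document; each statement's English description precedes it below -/
import Mathlib

section
/- For a nonnegative continuous function Y on [0, T*) with Y(0) = 0 satisfying Y(t) ≤ M₁ + M₂ t + M₃ t · exp(2c₁ Y(t)/ν) for all t ∈ [0, T*), where M₁, M₂, M₃, c₁, ν > 0 and T* = min{M₁/M₂, (M₁/M₃) exp(−6c₁M₁/ν)}, it holds that Y(t) < 3M₁ for all t ∈ [0, T*). -/
/- STATEMENT 2: bootstrap/barrier argument closing the 2D a priori estimates.
For nonnegative continuous `Y` on `[0, T*)` with `Y 0 = 0` satisfying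
`Y t ≤ M₁ + M₂ t + M₃ t * exp (2 c₁ Y t / ν)`, where
`T* = min (M₁/M₂) ((M₁/M₃) * exp (-6 c₁ M₁ / ν))`, we have `Y t < 3 M₁` on `[0, T*)`. -/
theorem bootstrap_2d (M₁ M₂ M₃ c₁ ν : ℝ)
    (hM₁ : 0 < M₁) (hM₂ : 0 < M₂) (hM₃ : 0 < M₃) (hc₁ : 0 < c₁) (hν : 0 < ν)
    (Tstar : ℝ)
    (hTstar : Tstar = min (M₁ / M₂) (M₁ / M₃ * Real.exp (-6 * c₁ * M₁ / ν)))
    (Y : ℝ → ℝ)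
    (hYcont : ContinuousOn Y (Set.Ico 0 Tstar))
    (hY0 : Y 0 = 0)
    (hYnonneg : ∀ t ∈ Set.Ico 0 Tstar, 0 ≤ Y t)
    (hYineq : ∀ t ∈ Set.Ico 0 Tstar,
      Y t ≤ M₁ + M₂ * t + M₃ * t * Real.exp (2 * c₁ * Y t / ν)) :
    ∀ t ∈ Set.Ico 0 Tstar, Y t < 3 * M₁ := by
  -- Key step: on [0,T*), if Y s ≤ 3M₁ then in fact Y s < 3M₁.
  have key : ∀ s ∈ Set.Ico 0 Tstar, Y s ≤ 3 * M₁ → Y s < 3 * M₁ := by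
    intro s hs hle
    have hs0 : (0:ℝ) ≤ s := hs.1
    have hsT : s < Tstar := hs.2
    have hs1 : s < M₁ / M₂ := lt_of_lt_of_le hsT (hTstar ▸ min_le_left _ _)
    have hs2 : s < M₁ / M₃ * Real.exp (-6 * c₁ * M₁ / ν) :=
      lt_of_lt_of_le hsT (hTstar ▸ min_le_right _ _)
    have e1 : M₂ * s < M₁ := by
      have := (lt_div_iff₀ hM₂).mp hs1
      linarith [this]
    have e2 : M₃ * s * Real.exp (2 * c₁ * Y s / ν) < M₁ := by
      have hexp : Real.exp (2 * c₁ * Y s / ν) ≤ Real.exp (6 * c₁ * M₁ / ν) := by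
        apply Real.exp_le_exp.mpr
        rw [div_le_div_iff₀ hν hν]
        nlinarith [mul_le_mul_of_nonneg_left hle (by positivity : (0:ℝ) ≤ 2 * c₁ * ν)]
      have h3 : M₃ * s < M₁ * Real.exp (-6 * c₁ * M₁ / ν) := by
        have h := (lt_div_iff₀ hM₃).mp (by rwa [div_mul_eq_mul_div] at hs2)
        linarith [mul_comm M₃ s]
      calc M₃ * s * Real.exp (2 * c₁ * Y s / ν)
          ≤ M₃ * s * Real.exp (6 * c₁ * M₁ / ν) := by
            apply mul_le_mul_of_nonneg_left hexp (by positivity)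
        _ < M₁ * Real.exp (-6 * c₁ * M₁ / ν) * Real.exp (6 * c₁ * M₁ / ν) := by
            apply mul_lt_mul_of_pos_right h3 (Real.exp_pos _)
        _ = M₁ := by
            rw [mul_assoc, ← Real.exp_add]
            have : -6 * c₁ * M₁ / ν + 6 * c₁ * M₁ / ν = 0 := by ring
            rw [this, Real.exp_zero, mul_one]
    have := hYineq s hs
    linarith
  intro t ht
  by_contra hcon
  push_neg at hcon
  have ht0 : (0:ℝ) ≤ t := ht.1
  have htT : t < Tstar := ht.2
  -- first crossing time
  set S : Set ℝ := Set.Icc 0 t ∩ Y ⁻¹' Set.Ici (3 * M₁) with hS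
  have hsub : Set.Icc 0 t ⊆ Set.Ico 0 Tstar := fun x hx =>
    ⟨hx.1, lt_of_le_of_lt hx.2 htT⟩
  have hScl : IsClosed S := by
    have : ContinuousOn Y (Set.Icc 0 t) := hYcont.mono hsub
    exact this.preimage_isClosed_of_isClosed isClosed_Icc isClosed_Ici
  have hSne : S.Nonempty := ⟨t, ⟨le_refl 0 |>.trans ht0, le_rfl⟩, hcon⟩
  have hSbdd : BddBelow S := ⟨0, fun x hx => hx.1.1⟩
  set s₀ := sInf S with hs₀def
  have hs₀S : s₀ ∈ S := hScl.csInf_mem hSne hSbdd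
  have hs₀mem : s₀ ∈ Set.Ico 0 Tstar := hsub hs₀S.1
  have hYs₀ : 3 * M₁ ≤ Y s₀ := hs₀S.2
  -- s₀ > 0
  have hs₀pos : 0 < s₀ := by
    rcases lt_or_eq_of_le hs₀S.1.1 with h | h
    · exact h
    · exfalso
      rw [← h] at hYs₀
      rw [hY0] at hYs₀
      linarith
  -- before s₀, Y < 3M₁
  have hbefore : ∀ x ∈ Set.Ico 0 s₀, Y x ≤ 3 * M₁ := by
    intro x hx
    by_contra hcx
    push_neg at hcx
    have hxS : x ∈ S := ⟨⟨hx.1, hx.2.le.trans hs₀S.1.2⟩, hcx.le⟩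
    exact absurd (csInf_le hSbdd hxS) (not_le.mpr hx.2)
  -- Y s₀ ≤ 3M₁ by left continuity
  have hle : Y s₀ ≤ 3 * M₁ := by
    have hne : s₀ ∈ closure (Set.Ico 0 s₀) := by
      rw [closure_Ico (ne_of_lt hs₀pos)]
      exact ⟨hs₀pos.le, le_rfl⟩
    have hNB : (nhdsWithin s₀ (Set.Ico 0 s₀)).NeBot :=
      mem_closure_iff_nhdsWithin_neBot.mp hne
    have htend : Filter.Tendsto Y (nhdsWithin s₀ (Set.Ico 0 s₀)) (nhds (Y s₀)) := by
      have := (hYcont s₀ hs₀mem).mono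
        (show Set.Ico 0 s₀ ⊆ Set.Ico 0 Tstar from fun x hx =>
          ⟨hx.1, lt_trans hx.2 hs₀mem.2⟩)
      exact this
    exact le_of_tendsto htend (Filter.eventually_inf_principal.mpr
      (Filter.Eventually.of_forall hbefore))
  have := key s₀ hs₀mem hle
  linarith
end

section
/- Let Y : [0, T*) → [0, ∞) be continuous with Y(0) = 0, and suppose positive constants M₁, M₂, M₃, c₁, c₂, c₃, ν are given. Define M₄ = (2 + c₂)M₁ + (3c₂/(2ν))M₁² + (4c₂c₃/ν³)M₁⁴ and suppose T* ≤ min{M₁/M₂, (M₁/M₃)·exp(−2c₁M₄/ν)}. If for every t ∈ [0, T*), Y(t) ≤ M₁ + M₂t + c₂M₃t·exp(2c₁Y(t)/ν) + (3c₂/(2ν))M₃²t²·exp(4c₁Y(t)/ν) + (4c₂c₃/ν³)M₃⁴t⁴·exp(8c₁Y(t)/ν), then Y(t) < M₄ for all t ∈ [0, T*). -/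
/- STATEMENT 3: bootstrap/barrier argument closing the 3D a priori estimates. -/
theorem bootstrap_3d (M₁ M₂ M₃ c₁ c₂ c₃ ν : ℝ)
    (hM₁ : 0 < M₁) (hM₂ : 0 < M₂) (hM₃ : 0 < M₃)
    (hc₁ : 0 < c₁) (hc₂ : 0 < c₂) (hc₃ : 0 < c₃) (hν : 0 < ν)
    (M₄ : ℝ)
    (hM₄ : M₄ = (2 + c₂) * M₁ + (3 * c₂ / (2 * ν)) * M₁ ^ 2 + (4 * c₂ * c₃ / ν ^ 3) * M₁ ^ 4)
    (Tstar : ℝ)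
    (hTstar : Tstar ≤ min (M₁ / M₂) (M₁ / M₃ * Real.exp (-2 * c₁ * M₄ / ν)))
    (Y : ℝ → ℝ)
    (hYcont : ContinuousOn Y (Set.Ico 0 Tstar))
    (hY0 : Y 0 = 0)
    (hYnonneg : ∀ t ∈ Set.Ico 0 Tstar, 0 ≤ Y t)
    (hYineq : ∀ t ∈ Set.Ico 0 Tstar,
      Y t ≤ M₁ + M₂ * t + c₂ * M₃ * t * Real.exp (2 * c₁ * Y t / ν)
        + (3 * c₂ / (2 * ν)) * M₃ ^ 2 * t ^ 2 * Real.exp (4 * c₁ * Y t / ν)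
        + (4 * c₂ * c₃ / ν ^ 3) * M₃ ^ 4 * t ^ 4 * Real.exp (8 * c₁ * Y t / ν)) :
    ∀ t ∈ Set.Ico 0 Tstar, Y t < M₄ := by
  have hT1 : Tstar ≤ M₁ / M₂ := le_trans hTstar (min_le_left _ _)
  have hT2 : Tstar ≤ M₁ / M₃ * Real.exp (-2 * c₁ * M₄ / ν) :=
    le_trans hTstar (min_le_right _ _)
  have hM₄pos : 0 < M₄ := by
    rw [hM₄]
    have h1 : 0 < (3 * c₂ / (2 * ν)) * M₁ ^ 2 := by positivity
    have h2 : 0 < (4 * c₂ * c₃ / ν ^ 3) * M₁ ^ 4 := by positivity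
    nlinarith
  intro t ht
  by_contra hcon
  push_neg at hcon
  -- Y 0 = 0 < M₄ ≤ Y t : intermediate value theorem gives s with Y s = M₄
  have hsubset : Set.Icc (0:ℝ) t ⊆ Set.Ico 0 Tstar := fun x hx =>
    ⟨hx.1, lt_of_le_of_lt hx.2 ht.2⟩
  have hivt := intermediate_value_Icc ht.1 (hYcont.mono hsubset)
  have hmem : M₄ ∈ Set.Icc (Y 0) (Y t) := by
    constructor
    · rw [hY0]; exact hM₄pos.le
    · exact hcon
  obtain ⟨s, hs, hYs⟩ := hivt hmem
  have hsIco : s ∈ Set.Ico 0 Tstar := hsubset hs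
  have hsTstar : s < Tstar := hsIco.2
  have hspos : 0 < s := by
    rcases lt_or_eq_of_le hs.1 with h | h
    · exact h
    · exfalso; rw [← h, hY0] at hYs; exact hM₄pos.ne' hYs.symm
  set E : ℝ := Real.exp (2 * c₁ * M₄ / ν) with hE
  have hEpos : 0 < E := Real.exp_pos _
  have hEinv : Real.exp (-2 * c₁ * M₄ / ν) * E = 1 := by
    rw [hE, ← Real.exp_add]
    rw [show -2 * c₁ * M₄ / ν + 2 * c₁ * M₄ / ν = 0 by ring, Real.exp_zero]
  -- bound M₂ * s < M₁
  have hb1 : M₂ * s < M₁ := by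
    have h1 : Tstar * M₂ ≤ M₁ := (le_div_iff₀ hM₂).mp hT1
    nlinarith
  -- bound a := M₃ * s * E < M₁
  set a : ℝ := M₃ * s * E with ha
  have hapos : 0 < a := by positivity
  have haM₁ : a < M₁ := by
    have h1 : M₃ * Tstar * E ≤ M₁ := by
      have h2 : M₃ * (M₁ / M₃ * Real.exp (-2 * c₁ * M₄ / ν)) * E
          = M₁ * (Real.exp (-2 * c₁ * M₄ / ν) * E) := by
        field_simp
      have h3 : M₃ * Tstar * E ≤ M₃ * (M₁ / M₃ * Real.exp (-2 * c₁ * M₄ / ν)) * E := by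
        have := mul_le_mul_of_nonneg_right
          (mul_le_mul_of_nonneg_left hT2 hM₃.le) hEpos.le
        linarith
      rw [h2, hEinv, mul_one] at h3
      exact h3
    have h4 : M₃ * s * E < M₃ * Tstar * E := by
      have := mul_lt_mul_of_pos_right
        (mul_lt_mul_of_pos_left hsTstar hM₃) hEpos
      linarith
    linarith
  have ha2 : a ^ 2 ≤ M₁ ^ 2 := pow_le_pow_left₀ hapos.le haM₁.le 2
  have ha4 : a ^ 4 ≤ M₁ ^ 4 := pow_le_pow_left₀ hapos.le haM₁.le 4
  -- rewrite the exponentials at s in terms of E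
  have hexp4 : Real.exp (4 * c₁ * M₄ / ν) = E ^ 2 := by
    rw [hE, ← Real.exp_nat_mul]
    norm_num; ring_nf
  have hexp8 : Real.exp (8 * c₁ * M₄ / ν) = E ^ 4 := by
    rw [hE, ← Real.exp_nat_mul]
    norm_num; ring_nf
  have hineq := hYineq s hsIco
  rw [hYs, hexp4, hexp8] at hineq
  -- now Y s = M₄ ≤ M₁ + M₂ s + c₂ a + (3c₂/(2ν)) a² + (4c₂c₃/ν³) a⁴ < M₄
  have hterm2 : c₂ * M₃ * s * E = c₂ * a := by rw [ha]; ring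
  have hterm3 : (3 * c₂ / (2 * ν)) * M₃ ^ 2 * s ^ 2 * E ^ 2
      = (3 * c₂ / (2 * ν)) * a ^ 2 := by rw [ha]; ring
  have hterm4 : (4 * c₂ * c₃ / ν ^ 3) * M₃ ^ 4 * s ^ 4 * E ^ 4
      = (4 * c₂ * c₃ / ν ^ 3) * a ^ 4 := by rw [ha]; ring
  rw [hterm2, hterm3, hterm4] at hineq
  have hc2' : 0 < 3 * c₂ / (2 * ν) := by positivity
  have hc3' : 0 < 4 * c₂ * c₃ / ν ^ 3 := by positivity
  nlinarith [mul_le_mul_of_nonneg_left ha2 hc2'.le,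
    mul_le_mul_of_nonneg_left ha4 hc3'.le,
    mul_lt_mul_of_pos_left haM₁ hc₂]
end

section
/- Let a, b : [0,T] → [0,∞) with a continuous and b integrable, A, B ≥ 0, and c₄ > 0, ν > 0. Suppose for all T' ∈ [0,T] with ∫₀^{T'} b(s) ds ≤ ν/(2c₄) we have sup_{s∈[0,T']} a(s)² + 2ν ∫₀^{T'} b(s) ds ≤ A + 2c₄ (∫₀^{T'} b(s) ds)². If A < ν²/(2c₄), and t ↦ ∫₀ᵗ b is continuous with value 0 at t = 0, then ∫₀ᵀ b(s) ds < ν/(2c₄). -/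
/- STATEMENT 14: the continuation argument of Proposition 4.1, controlling
`∫₀ᵗ ‖w^R(s)‖²_{Ḣ^{3/2}} ds` (here `∫₀ᵗ b`): from the conditional a priori inequality
`sup a² + 2ν∫b ≤ A + 2c₄(∫b)²` valid whenever `∫b ≤ ν/(2c₄)`, the strict smallness
`A < ν²/(2c₄)` and continuity of `t ↦ ∫₀ᵗ b` force `∫₀ᵀ b < ν/(2c₄)`. -/
theorem continuation_wR (T A ν c₄ : ℝ)
    (hT : 0 ≤ T) (hA : 0 ≤ A) (hν : 0 < ν) (hc₄ : 0 < c₄)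
    (a b : ℝ → ℝ)
    (ha : Continuous a) (hanonneg : ∀ t, 0 ≤ a t)
    (hbnonneg : ∀ t ∈ Set.Icc 0 T, 0 ≤ b t)
    (hbint : IntervalIntegrable b MeasureTheory.volume 0 T)
    (hcont : Continuous fun t => ∫ s in (0:ℝ)..t, b s)
    (hyp : ∀ T' ∈ Set.Icc 0 T, (∫ s in (0:ℝ)..T', b s) ≤ ν / (2 * c₄) →
      ∀ t ∈ Set.Icc 0 T', a t ^ 2 + 2 * ν * ∫ s in (0:ℝ)..T', b s
        ≤ A + 2 * c₄ * (∫ s in (0:ℝ)..T', b s) ^ 2)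
    (hAsmall : A < ν ^ 2 / (2 * c₄)) :
    (∫ s in (0:ℝ)..T, b s) < ν / (2 * c₄) := by
  by_contra h
  push_neg at h
  have hpos : 0 < ν / (2 * c₄) := by positivity
  have h0 : (∫ s in (0:ℝ)..(0:ℝ), b s) = 0 := intervalIntegral.integral_same
  have hmem : ν / (2 * c₄) ∈ Set.Icc (∫ s in (0:ℝ)..(0:ℝ), b s) (∫ s in (0:ℝ)..T, b s) := by
    rw [h0]; exact ⟨le_of_lt hpos, h⟩
  obtain ⟨T', hT', hFT'⟩ := intermediate_value_Icc hT hcont.continuousOn hmem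
  simp only [] at hFT'
  have key := hyp T' hT' (le_of_eq hFT') T' ⟨hT'.1, le_refl T'⟩
  rw [hFT'] at key
  have ha2 := sq_nonneg (a T')
  have h2c : (0:ℝ) < 2 * c₄ := by linarith
  have e1 : 2 * ν * (ν / (2 * c₄)) = ν ^ 2 / c₄ := by field_simp
  have e2 : 2 * c₄ * (ν / (2 * c₄)) ^ 2 = ν ^ 2 / (2 * c₄) := by field_simp
  rw [e1, e2] at key
  have h3 : ν ^ 2 / c₄ = 2 * (ν ^ 2 / (2 * c₄)) := by field_simp
  linarith
end
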